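/- arXiv:1805.02910 — 3 statements merged into one kernel-verified Lean document; each statement's English description precedes it below -/
import Mathlib

section
/- Let c, h, κ : ℝ → ℝ be continuous with κ(t) ≠ 0, and suppose x, y : ℝ → ℝ are twice differentiable with x(t) > 0, y(t) > 0, satisfying ẋ = c x (1 - x/κ) - h y and ẏ = y(1 - y/x), and y(t) - ẏ(t) > 0 for all t. Then y satisfies the second-order ODE ÿ + r ẏ + α y = β ẏ²/y + γ y², where r(t) = 1 + c(t) - 2h(t), α(t) = h(t) - c(t), β(t) = 2 - h(t), and γ(t) = -c(t)/κ(t). -/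
/-! Differentiating `ẏ = y (1 - y/x)` gives `ÿ = ẏ (1 - 2y/x) + y² ẋ / x²`. Once `ẏ` and `ẋ` are
replaced by the right-hand sides of the system, both sides of the claimed equation are rational
functions of `x, y, c, h, κ`, and they agree: the second-order equation is what remains after
eliminating `x = y² / (y - ẏ)`. -/

theorem HasDerivAt.mul_one_sub_div {𝕜 : Type*} [NontriviallyNormedField 𝕜] {x y : 𝕜 → 𝕜}
    {x' y' t : 𝕜} (hx : HasDerivAt x x' t) (hy : HasDerivAt y y' t) (hx0 : x t ≠ 0) :
    HasDerivAt (fun s => y s * (1 - y s / x s))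
      (y' * (1 - 2 * y t / x t) + y t ^ 2 * x' / x t ^ 2) t := by
  refine (hy.mul ((hasDerivAt_const t (1 : 𝕜)).sub (hy.div hx hx0))).congr_deriv ?_
  simp only [Pi.sub_apply, Pi.div_apply]
  field_simp
  ring

theorem basener_ross_identity {K : Type*} [Field K] {c h κ x y x' y' y'' : K} (hκ : κ ≠ 0)
    (hx : x ≠ 0) (hy : y ≠ 0) (hx' : x' = c * x * (1 - x / κ) - h * y)
    (hy' : y' = y * (1 - y / x)) (hy'' : y'' = y' * (1 - 2 * y / x) + y ^ 2 * x' / x ^ 2) :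
    y'' + (1 + c - 2 * h) * y' + (h - c) * y = (2 - h) * y' ^ 2 / y + (-(c / κ)) * y ^ 2 := by
  subst hy'' hy' hx'
  field_simp
  ring

theorem basener_ross_reduction_general
    (c h κ : ℝ → ℝ)
    (hκne : ∀ t, κ t ≠ 0)
    (x y : ℝ → ℝ) (hx : ContDiff ℝ 2 x) (hy : ContDiff ℝ 2 y)
    (hxpos : ∀ t, x t > 0) (hypos : ∀ t, y t > 0)
    (hode1 : ∀ t, deriv x t = c t * x t * (1 - x t / κ t) - h t * y t)
    (hode2 : ∀ t, deriv y t = y t * (1 - y t / x t)) :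
    ∀ t, deriv (deriv y) t + (1 + c t - 2 * h t) * deriv y t + (h t - c t) * y t
      = (2 - h t) * (deriv y t)^2 / y t + (-(c t / κ t)) * (y t)^2 := by
  intro t
  have hy'' : HasDerivAt (deriv y)
      (deriv y t * (1 - 2 * y t / x t) + y t ^ 2 * deriv x t / x t ^ 2) t :=
    ((hx.differentiable two_ne_zero t).hasDerivAt.mul_one_sub_div
      (hy.differentiable two_ne_zero t).hasDerivAt (hxpos t).ne').congr_of_eventuallyEq
      (.of_forall hode2)
  exact basener_ross_identity (hκne t) (hxpos t).ne' (hypos t).ne' (hode1 t) (hode2 t) hy''.deriv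

theorem basener_ross_reduction
    (c h κ : ℝ → ℝ) (hc : Continuous c) (hh : Continuous h) (hκ : Continuous κ)
    (hκne : ∀ t, κ t ≠ 0)
    (x y : ℝ → ℝ) (hx : ContDiff ℝ 2 x) (hy : ContDiff ℝ 2 y)
    (hxpos : ∀ t, x t > 0) (hypos : ∀ t, y t > 0)
    (hode1 : ∀ t, deriv x t = c t * x t * (1 - x t / κ t) - h t * y t)
    (hode2 : ∀ t, deriv y t = y t * (1 - y t / x t))
    (hpos : ∀ t, y t - deriv y t > 0) :
    ∀ t, deriv (deriv y) t + (1 + c t - 2 * h t) * deriv y t + (h t - c t) * y t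
      = (2 - h t) * (deriv y t)^2 / y t + (-(c t / κ t)) * (y t)^2 :=
  basener_ross_reduction_general c h κ hκne x y hx hy hxpos hypos hode1 hode2
end

section
/- Let n ≠ 1, σ = (n+3)/4, r : ℝ → ℝ continuous, and let φ(t) = exp((1/(2(σ-1))) ∫₀ᵗ r). If w = φ z where z : ℝ → ℝ is twice differentiable and positive and satisfies z̈ + (4/(1-n)) I(t) z = σ ż²/z + (4q/(1-n)) zⁿ with I(t) = p(t) - (1/4)(r(t)² + 2ṙ(t)), then w satisfies ẅ + r ẇ + (4p/(1-n)) w = σ ẇ²/w + (4q/(1-n)) exp(-2∫₀ᵗ r) wⁿ. -/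
/-!
With `R = ∫₀ᵗ r` and `c = 1 / (2(σ - 1)) = 2 / (n - 1)`, the factor `E = exp (c R)` satisfies
`E' = c r E`, so `w = E z` gives `ẇ = E (c r z + ż)` and
`ẅ = E (c r (c r z + ż) + c ṙ z + c r ż + z̈)`. Since `c (n - 1) = 2`, also
`exp (-2R) wⁿ = E zⁿ`, so every term of the equation for `w` carries the factor `E`; after
dividing by it, the equation for `w` is the equation for `z`, because `2σc = 2c + 1` and
`c² (1 - σ) + c = c / 2 = 1 / (n - 1)`.
-/

open Real

theorem HasDerivAt.exp_const_mul_mul {R z : ℝ → ℝ} {r z' c t : ℝ} (hR : HasDerivAt R r t)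
    (hz : HasDerivAt z z' t) :
    HasDerivAt (fun u => Real.exp (c * R u) * z u) (Real.exp (c * R t) * (c * r * z t + z')) t :=
  ((hR.const_mul c).exp.mul hz).congr_deriv (by ring)

theorem deriv_exp_const_mul_mul {R r z : ℝ → ℝ} (c : ℝ) (hR : ∀ u, HasDerivAt R (r u) u)
    (hz : Differentiable ℝ z) :
    deriv (fun u => exp (c * R u) * z u) = fun u => exp (c * R u) * (c * r u * z u + deriv z u) :=
  funext fun u => ((hR u).exp_const_mul_mul (hz u).hasDerivAt).deriv

theorem deriv_deriv_exp_const_mul_mul {R r z : ℝ → ℝ} (c : ℝ) (hR : ∀ u, HasDerivAt R (r u) u)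
    (hr : Differentiable ℝ r) (hz : Differentiable ℝ z) (hz' : Differentiable ℝ (deriv z))
    (t : ℝ) :
    deriv (deriv fun u => exp (c * R u) * z u) t = exp (c * R t) *
      (c * r t * (c * r t * z t + deriv z t)
        + (c * deriv r t * z t + c * r t * deriv z t + deriv (deriv z) t)) := by
  rw [deriv_exp_const_mul_mul c hR hz]
  exact ((hR t).exp_const_mul_mul ((((hr t).hasDerivAt.const_mul c).mul (hz t).hasDerivAt).add
    (hz' t).hasDerivAt)).deriv

theorem exp_neg_two_mul_mul_exp_mul_rpow {a c n z : ℝ} (hc : c * (n - 1) = 2) (hz : 0 ≤ z) :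
    exp (-2 * a) * (exp (c * a) * z) ^ n = exp (c * a) * z ^ n := by
  have hexp : -2 * a + c * a * n = c * a := by linear_combination a * hc
  rw [mul_rpow (exp_pos _).le hz, ← exp_mul, ← mul_assoc, ← exp_add, hexp]

theorem kummerSchwarz_gauge_identity {n c q p r r' z z' z'' zn E : ℝ} (hc : c * (n - 1) = 2)
    (hz : z ≠ 0) (hE : E ≠ 0)
    (hzode : z'' + 4 / (1 - n) * (p - 1 / 4 * (r ^ 2 + 2 * r')) * z
      = (n + 3) / 4 * z' ^ 2 / z + 4 * q / (1 - n) * zn) :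
    E * (c * r * (c * r * z + z') + (c * r' * z + c * r * z' + z''))
        + r * (E * (c * r * z + z')) + 4 * p / (1 - n) * (E * z)
      = (n + 3) / 4 * (E * (c * r * z + z')) ^ 2 / (E * z) + 4 * q / (1 - n) * (E * zn) := by
  have hn : n - 1 ≠ 0 := by rintro h; norm_num [h] at hc
  have hn' : 1 - n ≠ 0 := fun h => hn (by linarith)
  rw [← eq_sub_iff_add_eq] at hzode
  rw [hzode, eq_div_of_mul_eq hn hc]
  field_simp
  ring

theorem dissipative_kummer_schwarz_transform_general
    (n σ q : ℝ) (hn : n ≠ 1) (hσ : σ = (n + 3) / 4)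
    (r p : ℝ → ℝ) (hr : ContDiff ℝ 1 r)
    (z w : ℝ → ℝ) (hz : ContDiff ℝ 2 z) (hzpos : ∀ t, z t > 0)
    (hzode : ∀ t, deriv (deriv z) t
        + (4 / (1 - n)) * (p t - (1/4) * ((r t)^2 + 2 * deriv r t)) * z t
      = σ * (deriv z t)^2 / z t + (4 * q / (1 - n)) * (z t) ^ n)
    (hw : ∀ t, w t = Real.exp ((1 / (2 * (σ - 1))) * ∫ s in (0:ℝ)..t, r s) * z t) :
    ∀ t, deriv (deriv w) t + r t * deriv w t + (4 * p t / (1 - n)) * w t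
      = σ * (deriv w t)^2 / w t
        + (4 * q / (1 - n)) * Real.exp (-2 * ∫ s in (0:ℝ)..t, r s) * (w t) ^ n := by
  intro t
  subst hσ
  set R : ℝ → ℝ := fun u => ∫ s in (0:ℝ)..u, r s
  set c := 1 / (2 * ((n + 3) / 4 - 1))
  have hc : c * (n - 1) = 2 := by
    rw [show c = 1 / ((n - 1) / 2) by ring, one_div_div, div_mul_cancel₀ _ (sub_ne_zero.mpr hn)]
  have hR (u : ℝ) : HasDerivAt R (r u) u := (hr.continuous.integral_hasStrictDerivAt 0 u).hasDerivAt
  obtain rfl : w = fun u => exp (c * R u) * z u := funext hw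
  rw [deriv_deriv_exp_const_mul_mul c hR (hr.differentiable one_ne_zero)
      (hz.differentiable two_ne_zero) hz.differentiable_deriv_two,
    deriv_exp_const_mul_mul c hR (hz.differentiable two_ne_zero), mul_assoc (4 * q / (1 - n)),
    exp_neg_two_mul_mul_exp_mul_rpow hc (hzpos t).le]
  exact kummerSchwarz_gauge_identity hc (hzpos t).ne' (exp_ne_zero _) (hzode t)

theorem dissipative_kummer_schwarz_transform
    (n σ q : ℝ) (hn : n ≠ 1) (hn' : n ≠ -1) (hσ : σ = (n + 3) / 4)
    (r p : ℝ → ℝ) (hr : ContDiff ℝ 1 r) (hp : Differentiable ℝ p)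
    (z w : ℝ → ℝ) (hz : ContDiff ℝ 2 z) (hzpos : ∀ t, z t > 0)
    (hzode : ∀ t, deriv (deriv z) t
        + (4 / (1 - n)) * (p t - (1/4) * ((r t)^2 + 2 * deriv r t)) * z t
      = σ * (deriv z t)^2 / z t + (4 * q / (1 - n)) * (z t) ^ n)
    (hw : ∀ t, w t = Real.exp ((1 / (2 * (σ - 1))) * ∫ s in (0:ℝ)..t, r s) * z t) :
    ∀ t, deriv (deriv w) t + r t * deriv w t + (4 * p t / (1 - n)) * w t
      = σ * (deriv w t)^2 / w t
        + (4 * q / (1 - n)) * Real.exp (-2 * ∫ s in (0:ℝ)..t, r s) * (w t) ^ n :=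
  dissipative_kummer_schwarz_transform_general n σ q hn hσ r p hr z w hz hzpos hzode hw
end

section
/- Let n ≠ 1, σ = (n+3)/4, and let u, v be twice differentiable solutions of z̈ + I(t) z = 0 with constant Wronskian W = u v̇ - v u̇ ≠ 0. Let A, B, C be constants with (AC - B²)W² = q, and suppose A u(t)² + 2B u(t)v(t) + C v(t)² > 0 for all t. Then z(t) = (A u² + 2B u v + C v²)^{2/(1-n)} satisfies z̈ + (4/(1-n)) I z = σ ż²/z + (4q/(1-n)) zⁿ. -/
/-!
Write `z = Q ^ α` with `Q = A u² + 2B uv + C v²` and `α = 2 / (1 - n)`. Since `u'' = -I u` and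
`v'' = -I v`, the quadratic form satisfies the Ermakov-type equation
`2 Q Q'' - Q'² + 4 I Q² = 4 (AC - B²) W² = 4 q`, the constant coming from the identity
`(A u² + 2B uv + C v²)(A u'² + 2B u'v' + C v'²) - (A u u' + B (u v' + u' v) + C v v')² = (AC - B²)(u v' - v u')²`.
The power substitution turns this equation into the generalized one: the residual of the latter
at `z = Q ^ α` is `(α / 2) Q ^ (α - 2)` times the residual of the former.
-/

open Real

section QuadraticForm

variable (A B C : ℝ) {u v : ℝ → ℝ}

lemma hasDerivAt_quadForm {u' v' t : ℝ} (hu : HasDerivAt u u' t) (hv : HasDerivAt v v' t) :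
    HasDerivAt (fun s => A * u s ^ 2 + 2 * B * u s * v s + C * v s ^ 2)
      (2 * (A * u t * u' + B * (u t * v' + u' * v t) + C * v t * v')) t := by
  refine ((((hu.pow 2).const_mul A).add ((hu.const_mul (2 * B)).mul hv)).add
    ((hv.pow 2).const_mul C)).congr_deriv ?_
  push_cast
  ring

lemma hasDerivAt_polarForm {u' v' u'' v'' t : ℝ} (hu : HasDerivAt u u' t) (hv : HasDerivAt v v' t)
    (hu' : HasDerivAt (deriv u) u'' t) (hv' : HasDerivAt (deriv v) v'' t) :
    HasDerivAt (fun s => 2 * (A * u s * deriv u s + B * (u s * deriv v s + deriv u s * v s)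
        + C * v s * deriv v s))
      (2 * (A * u' * deriv u t + A * u t * u'' + B * (u' * deriv v t + u t * v''
        + u'' * v t + deriv u t * v') + C * v' * deriv v t + C * v t * v'')) t := by
  refine (((((hu.const_mul A).mul hu').add (((hu.mul hv').add (hu'.mul hv)).const_mul B)).add
    ((hv.const_mul C).mul hv')).const_mul 2).congr_deriv ?_
  ring

lemma quadForm_ermakov {I : ℝ → ℝ} (hu : ContDiff ℝ 2 u) (hv : ContDiff ℝ 2 v) {t : ℝ}
    (huode : deriv (deriv u) t + I t * u t = 0) (hvode : deriv (deriv v) t + I t * v t = 0) :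
    let Q := fun s => A * u s ^ 2 + 2 * B * u s * v s + C * v s ^ 2
    2 * Q t * deriv (deriv Q) t - deriv Q t ^ 2 + 4 * I t * Q t ^ 2
      = 4 * (A * C - B ^ 2) * (u t * deriv v t - v t * deriv u t) ^ 2 := by
  intro Q
  have hud : Differentiable ℝ u := hu.differentiable two_ne_zero
  have hvd : Differentiable ℝ v := hv.differentiable two_ne_zero
  have hQ' : deriv Q = fun s => 2 * (A * u s * deriv u s
      + B * (u s * deriv v s + deriv u s * v s) + C * v s * deriv v s) :=
    funext fun s => (hasDerivAt_quadForm A B C (hud s).hasDerivAt (hvd s).hasDerivAt).deriv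
  have hQ'' := hasDerivAt_polarForm A B C (hud t).hasDerivAt (hvd t).hasDerivAt
    (hu.differentiable_deriv_two t).hasDerivAt (hv.differentiable_deriv_two t).hasDerivAt
  rw [hQ', hQ''.deriv]
  linear_combination (4 * (A * u t ^ 2 + 2 * B * u t * v t + C * v t ^ 2))
    * ((A * u t + B * v t) * huode + (B * u t + C * v t) * hvode)

end QuadraticForm

lemma deriv_deriv_rpow_const {f : ℝ → ℝ} (hf : ContDiff ℝ 2 f) (hf0 : ∀ x, f x ≠ 0) (p t : ℝ) :
    deriv (deriv fun x => f x ^ p) t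
      = p * (f t ^ (p - 1) * deriv (deriv f) t + (p - 1) * f t ^ (p - 2) * deriv f t ^ 2) := by
  have hfd : Differentiable ℝ f := hf.differentiable two_ne_zero
  have hderiv : deriv (fun x => f x ^ p) = fun x => deriv f x * p * f x ^ (p - 1) :=
    funext fun x => deriv_rpow_const (hfd x) (Or.inl (hf0 x))
  have hderiv2 : HasDerivAt (fun x => deriv f x * p * f x ^ (p - 1))
      (deriv (deriv f) t * p * f t ^ (p - 1)
        + deriv f t * p * (deriv f t * (p - 1) * f t ^ (p - 1 - 1))) t :=
    ((hf.differentiable_deriv_two t).hasDerivAt.mul_const p).mul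
      ((hfd t).hasDerivAt.rpow_const (Or.inl (hf0 t)))
  rw [hderiv, hderiv2.deriv, sub_sub, one_add_one_eq_two]
  ring

theorem rpow_solves_generalized_ermakov {Q : ℝ → ℝ} {n I q t : ℝ} (hn : n ≠ 1)
    (hQ : ContDiff ℝ 2 Q) (hpos : ∀ s, 0 < Q s)
    (hQode : 2 * Q t * deriv (deriv Q) t - deriv Q t ^ 2 + 4 * I * Q t ^ 2 = 4 * q) :
    let z := fun s => Q s ^ (2 / (1 - n))
    deriv (deriv z) t + 4 / (1 - n) * I * z t
      = (n + 3) / 4 * deriv z t ^ 2 / z t + 4 * q / (1 - n) * z t ^ n := by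
  intro z
  set α := 2 / (1 - n) with hα
  have hx : 0 < Q t := hpos t
  rw [deriv_deriv_rpow_const hQ (fun s => (hpos s).ne'),
    deriv_rpow_const (hQ.differentiable two_ne_zero t) (Or.inl hx.ne')]
  -- everything is a multiple of `E = Q t ^ (α - 2)`, since `α n = α - 2`
  set E := Q t ^ (α - 2) with hE_def
  have hpow_pred : Q t ^ (α - 1) = E * Q t := by
    rw [hE_def, ← rpow_add_one hx.ne']; ring_nf
  have hz_eq : z t = E * Q t ^ 2 := by
    rw [show z t = Q t ^ α from rfl, hE_def, ← rpow_natCast, ← rpow_add hx]; ring_nf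
  have hz_pow : z t ^ n = E := by
    rw [show z t = Q t ^ α from rfl, ← rpow_mul hx.le, hE_def, hα]
    congr 1
    field_simp
    ring
  have hE : E ≠ 0 := (rpow_pos_of_pos hx _).ne'
  rw [hz_pow, hz_eq, hpow_pred]
  field_simp
  linear_combination 4 * (1 - n) * hQode

theorem ermakov_pinney_superposition_general
    (n σ q W A B C : ℝ) (hn : n ≠ 1) (hσ : σ = (n + 3) / 4)
    (I u v : ℝ → ℝ) (hu : ContDiff ℝ 2 u) (hv : ContDiff ℝ 2 v)
    (huode : ∀ t, deriv (deriv u) t + I t * u t = 0)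
    (hvode : ∀ t, deriv (deriv v) t + I t * v t = 0)
    (hW : ∀ t, u t * deriv v t - v t * deriv u t = W)
    (hq : (A * C - B^2) * W^2 = q)
    (hQpos : ∀ t, A * (u t)^2 + 2 * B * u t * v t + C * (v t)^2 > 0)
    (z : ℝ → ℝ)
    (hz : ∀ t, z t = (A * (u t)^2 + 2 * B * u t * v t + C * (v t)^2) ^ (2 / (1 - n))) :
    ∀ t, deriv (deriv z) t + (4 / (1 - n)) * I t * z t
      = σ * (deriv z t)^2 / z t + (4 * q / (1 - n)) * (z t) ^ n := by
  intro t
  obtain rfl : z = fun s => (A * u s ^ 2 + 2 * B * u s * v s + C * v s ^ 2) ^ (2 / (1 - n)) :=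
    funext hz
  subst hσ
  have hQ : ContDiff ℝ 2 fun s => A * u s ^ 2 + 2 * B * u s * v s + C * v s ^ 2 := by fun_prop
  refine rpow_solves_generalized_ermakov hn hQ hQpos ?_
  rw [quadForm_ermakov A B C hu hv (huode t) (hvode t), hW t, ← hq]
  ring

theorem ermakov_pinney_superposition
    (n σ q W A B C : ℝ) (hn : n ≠ 1) (hσ : σ = (n + 3) / 4)
    (I u v : ℝ → ℝ) (hu : ContDiff ℝ 2 u) (hv : ContDiff ℝ 2 v)
    (huode : ∀ t, deriv (deriv u) t + I t * u t = 0)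
    (hvode : ∀ t, deriv (deriv v) t + I t * v t = 0)
    (hW : ∀ t, u t * deriv v t - v t * deriv u t = W) (hWne : W ≠ 0)
    (hq : (A * C - B^2) * W^2 = q)
    (hQpos : ∀ t, A * (u t)^2 + 2 * B * u t * v t + C * (v t)^2 > 0)
    (z : ℝ → ℝ)
    (hz : ∀ t, z t = (A * (u t)^2 + 2 * B * u t * v t + C * (v t)^2) ^ (2 / (1 - n))) :
    ∀ t, deriv (deriv z) t + (4 / (1 - n)) * I t * z t
      = σ * (deriv z t)^2 / z t + (4 * q / (1 - n)) * (z t) ^ n :=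
  ermakov_pinney_superposition_general n σ q W A B C hn hσ I u v hu hv huode hvode hW hq hQpos z hz
end
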